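/- arXiv:2210.09443 — 3 statements merged into one kernel-verified Lean document; each statement's English description precedes it below -/
import Mathlib

section
/- Let {K_i}_{i∈ℕ} be bounded, convex, symmetric, closed subsets of ℝ^d and suppose K = closure of the convex hull of ⋃_i K_i is bounded. Then p_{K°} = sup_i p_{(K_i)°}. -/
open scoped RealInnerProductSpace Pointwise

/-- The polar of a set in ℝ^d with respect to the Euclidean inner product. -/
def polarSet {d : ℕ} (K : Set (EuclideanSpace ℝ (Fin d))) : Set (EuclideanSpace ℝ (Fin d)) :=
  {v | ∀ w ∈ K, |⟪v, w⟫| ≤ 1}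

lemma polarSet_convex {d : ℕ} (K : Set (EuclideanSpace ℝ (Fin d))) :
    Convex ℝ (polarSet K) := by
  intro x hx y hy a b ha hb hab w hw
  have hx' := hx w hw
  have hy' := hy w hw
  have : ⟪a • x + b • y, w⟫ = a * ⟪x, w⟫ + b * ⟪y, w⟫ := by
    rw [inner_add_left, real_inner_smul_left, real_inner_smul_left]
  rw [this]
  calc |a * ⟪x, w⟫ + b * ⟪y, w⟫| ≤ |a * ⟪x, w⟫| + |b * ⟪y, w⟫| := abs_add_le _ _
    _ = a * |⟪x, w⟫| + b * |⟪y, w⟫| := by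
        rw [abs_mul, abs_mul, abs_of_nonneg ha, abs_of_nonneg hb]
    _ ≤ a * 1 + b * 1 := by
        gcongr
    _ = 1 := by linarith

lemma polarSet_zero_mem {d : ℕ} (K : Set (EuclideanSpace ℝ (Fin d))) :
    (0 : EuclideanSpace ℝ (Fin d)) ∈ polarSet K := by
  intro w _
  simp

lemma polarSet_anti {d : ℕ} {A B : Set (EuclideanSpace ℝ (Fin d))} (h : A ⊆ B) :
    polarSet B ⊆ polarSet A := fun v hv w hw => hv w (h hw)

lemma polarSet_closure_convexHull {d : ℕ} (S : Set (EuclideanSpace ℝ (Fin d))) :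
    polarSet (closure (convexHull ℝ S)) = polarSet S := by
  apply le_antisymm
  · exact polarSet_anti ((subset_convexHull ℝ S).trans subset_closure)
  · intro v hv
    intro w hw
    set C : Set (EuclideanSpace ℝ (Fin d)) := {w | |⟪v, w⟫| ≤ 1} with hC
    have hCc : Convex ℝ C := by
      intro x hx y hy a b ha hb hab
      simp only [hC, Set.mem_setOf_eq] at *
      have : ⟪v, a • x + b • y⟫ = a * ⟪v, x⟫ + b * ⟪v, y⟫ := by
        rw [inner_add_right, real_inner_smul_right, real_inner_smul_right]
      rw [this]
      calc |a * ⟪v, x⟫ + b * ⟪v, y⟫| ≤ |a * ⟪v, x⟫| + |b * ⟪v, y⟫| := abs_add_le _ _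
        _ = a * |⟪v, x⟫| + b * |⟪v, y⟫| := by
            rw [abs_mul, abs_mul, abs_of_nonneg ha, abs_of_nonneg hb]
        _ ≤ a * 1 + b * 1 := by gcongr
        _ = 1 := by linarith
    have hCcl : IsClosed C := by
      have : Continuous fun w : EuclideanSpace ℝ (Fin d) => |⟪v, w⟫| :=
        (continuous_const.inner continuous_id).abs
      exact isClosed_le this continuous_const
    have hsub : S ⊆ C := fun w hw => hv w hw
    have : closure (convexHull ℝ S) ⊆ C :=
      closure_minimal (convexHull_min hsub hCc) hCcl
    exact this hw

/-- If `{K_i}` are bounded, convex, symmetric, closed subsets of ℝ^d and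
`K = closure (conv (⋃ i, K i))` is bounded, then `p_{K°} = sup_i p_{(K_i)°}`. -/
theorem gauge_polar_iUnion (d : ℕ) (K : ℕ → Set (EuclideanSpace ℝ (Fin d)))
    (hne : ∀ i, (K i).Nonempty) (hb : ∀ i, Bornology.IsBounded (K i))
    (hc : ∀ i, Convex ℝ (K i)) (hs : ∀ i, ∀ v ∈ K i, -v ∈ K i)
    (hcl : ∀ i, IsClosed (K i))
    (hKb : Bornology.IsBounded (closure (convexHull ℝ (⋃ i, K i)))) :
    ∀ v, gauge (polarSet (closure (convexHull ℝ (⋃ i, K i)))) v =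
      ⨆ i, gauge (polarSet (K i)) v := by
  intro v
  set Kbig := closure (convexHull ℝ (⋃ i, K i)) with hKbig
  have hUnion : polarSet (⋃ i, K i) = ⋂ i, polarSet (K i) := by
    ext x
    simp only [polarSet, Set.mem_setOf_eq, Set.mem_iUnion, Set.mem_iInter]
    constructor
    · intro h i w hw; exact h w ⟨i, hw⟩
    · rintro h w ⟨i, hw⟩; exact h i w hw
  have hPolar : polarSet Kbig = ⋂ i, polarSet (K i) := by
    rw [hKbig, polarSet_closure_convexHull, hUnion]
  -- The big polar set is absorbent
  obtain ⟨R, hR⟩ := hKb.subset_closedBall 0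
  have hRpos : (0 : ℝ) < max R 1 := lt_of_lt_of_le one_pos (le_max_right _ _)
  have hball : Metric.ball (0 : EuclideanSpace ℝ (Fin d)) (max R 1)⁻¹ ⊆ polarSet Kbig := by
    intro x hx w hw
    have hxn : ‖x‖ < (max R 1)⁻¹ := by simpa using hx
    have hwn : ‖w‖ ≤ max R 1 := by
      have := hR hw
      simp only [Metric.mem_closedBall, dist_zero_right] at this
      exact this.trans (le_max_left _ _)
    calc |⟪x, w⟫| ≤ ‖x‖ * ‖w‖ := abs_real_inner_le_norm x w
      _ ≤ (max R 1)⁻¹ * max R 1 := by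
          apply mul_le_mul hxn.le hwn (norm_nonneg _)
          positivity
      _ = 1 := inv_mul_cancel₀ (ne_of_gt hRpos)
  have habs : Absorbent ℝ (polarSet Kbig) :=
    (absorbent_ball_zero (by positivity)).mono hball
  have habsInter : Absorbent ℝ (⋂ i, polarSet (K i)) := hPolar ▸ habs
  have habsi : ∀ i, Absorbent ℝ (polarSet (K i)) := fun i =>
    habsInter.mono (Set.iInter_subset _ i)
  rw [hPolar]
  -- each gauge ≤ gauge of the intersection
  have hle : ∀ i, gauge (polarSet (K i)) v ≤ gauge (⋂ j, polarSet (K j)) v := fun i =>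
    gauge_mono habsInter (Set.iInter_subset _ i) v
  have hbdd : BddAbove (Set.range fun i => gauge (polarSet (K i)) v) :=
    ⟨gauge (⋂ j, polarSet (K j)) v, by rintro _ ⟨i, rfl⟩; exact hle i⟩
  apply le_antisymm
  · -- gauge of intersection ≤ sup
    apply le_of_forall_gt_imp_ge_of_dense
    intro r hr
    have hr0 : 0 < r := lt_of_le_of_lt (le_trans (gauge_nonneg v)
      (le_ciSup hbdd 0)) hr
    have hmem : ∀ i, v ∈ r • polarSet (K i) := by
      intro i
      have hgi : gauge (polarSet (K i)) v < r :=
        lt_of_le_of_lt (le_ciSup hbdd i) hr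
      obtain ⟨b, hb0, hbr, hvb⟩ := exists_lt_of_gauge_lt (habsi i) hgi
      obtain ⟨w, hw, rfl⟩ := hvb
      refine ⟨(b / r) • w, ?_, ?_⟩
      · exact (polarSet_convex (K i)).smul_mem_of_zero_mem (polarSet_zero_mem _) hw
          ⟨by positivity, by rw [div_le_one hr0]; exact hbr.le⟩
      · show r • ((b / r) • w) = b • w
        rw [smul_smul]
        congr 1
        field_simp
    have : v ∈ r • ⋂ i, polarSet (K i) := by
      refine ⟨r⁻¹ • v, Set.mem_iInter.2 fun i => ?_, show r • (r⁻¹ • v) = v by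
        rw [smul_smul, mul_inv_cancel₀ hr0.ne', one_smul]⟩
      obtain ⟨y, hy, hyv⟩ := hmem i
      have hyy : y = r⁻¹ • v := by
        have hyv' : r • y = v := hyv
        rw [← hyv', smul_smul, inv_mul_cancel₀ hr0.ne', one_smul]
      rwa [hyy] at hy
    exact gauge_le_of_mem hr0.le this
  · exact ciSup_le hle
end

section
/- Let A, B be symmetric positive definite d×d matrices, and suppose A = S* D_A S, B = S* D_B S for an invertible S and diagonal D_A, D_B. Then for 0 < t < 1, the weighted geometric mean satisfies A #_t B = S* (D_A)^{1−t} (D_B)^t S. -/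
/-!
Put `W := diagonal (√a) * S * Asqrt⁻¹`. Since `Asqrt` is symmetric with `Asqrt² = Sᵀ (diagonal a) S`,
`W` is orthogonal and `Asqrt⁻¹ B Asqrt⁻¹ = Wᵀ (diagonal (b / a)) W`. The spectral calculus does not
depend on the chosen orthogonal diagonalization (on a finite spectrum every function is a
polynomial), so `R = Wᵀ (diagonal (b / a)^t) W`, and conjugating back by `Asqrt` gives
`Sᵀ (diagonal (a (b / a)^t)) S = Sᵀ (diagonal (a^(1-t) b^t)) S`.
-/

open Matrix

/-- `R` is the `t`-th power of `M` in the sense of the spectral functional calculus: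
`M = Uᵀ (diagonal e) U` with `U` orthogonal, and `R = Uᵀ (diagonal e^t) U`. -/
def IsRpowOf {d : ℕ} (t : ℝ) (M R : Matrix (Fin d) (Fin d) ℝ) : Prop :=
  ∃ (U : Matrix (Fin d) (Fin d) ℝ) (e : Fin d → ℝ),
    Uᵀ * U = 1 ∧ (∀ i, 0 < e i) ∧
    M = Uᵀ * Matrix.diagonal e * U ∧
    R = Uᵀ * Matrix.diagonal (fun i => e i ^ t) * U

open Polynomial

theorem Polynomial.aeval_units_conj {R A : Type*} [CommSemiring R] [Ring A] [Algebra R A]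
    (u : Aˣ) (x : A) (p : R[X]) : aeval (u * x * u⁻¹ : A) p = u * aeval x p * u⁻¹ := by
  simpa [ConjAct.units_smul_def] using
    aeval_algHom_apply (MulSemiringAction.toAlgHom R A (ConjAct.toConjAct u)) x p

namespace Matrix

variable {n : Type*} [Fintype n] [DecidableEq n]

theorem aeval_diagonal {R : Type*} [CommSemiring R] (e : n → R) (p : R[X]) :
    aeval (diagonal e) p = diagonal fun i => p.eval (e i) := by
  have h := aeval_algHom_apply (diagonalAlgHom R) e p
  simp only [diagonalAlgHom_apply, aeval_pi] at h
  exact h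

theorem aeval_transpose_mul_mul {R : Type*} [CommRing R] {U : Matrix n n R} (hU : Uᵀ * U = 1)
    (D : Matrix n n R) (p : R[X]) : aeval (Uᵀ * D * U) p = Uᵀ * aeval D p * U :=
  aeval_units_conj ⟨Uᵀ, U, hU, mul_eq_one_comm.mp hU⟩ D p

/-- On the finite set of eigenvalues, `g` agrees with a Lagrange interpolation polynomial. -/
theorem transpose_mul_diagonal_comp_mul_eq {K : Type*} [Field K] {U V : Matrix n n K}
    {e f : n → K} (hU : Uᵀ * U = 1) (hV : Vᵀ * V = 1)
    (h : Uᵀ * diagonal e * U = Vᵀ * diagonal f * V) (g : K → K) :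
    Uᵀ * diagonal (g ∘ e) * U = Vᵀ * diagonal (g ∘ f) * V := by
  classical
  set p := Lagrange.interpolate (Finset.univ.image e ∪ Finset.univ.image f) id g
  have hp {x} (hx : x ∈ Finset.univ.image e ∪ Finset.univ.image f) : p.eval x = g x :=
    Lagrange.eval_interpolate_at_node g (Set.injOn_id _) hx
  have he : g ∘ e = fun i => p.eval (e i) := funext fun i => (hp (by simp)).symm
  have hf : g ∘ f = fun i => p.eval (f i) := funext fun i => (hp (by simp)).symm
  rw [he, hf, ← aeval_diagonal, ← aeval_diagonal, ← aeval_transpose_mul_mul hU,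
    ← aeval_transpose_mul_mul hV, h]

theorem pos_of_posDef_transpose_mul_diagonal_mul {S : Matrix n n ℝ} {a : n → ℝ} (hS : IsUnit S)
    (h : (Sᵀ * diagonal a * S).PosDef) (i : n) : 0 < a i := by
  rw [← conjTranspose_eq_transpose_of_trivial, ← star_eq_conjTranspose,
    hS.posDef_star_left_conjugate_iff, posDef_diagonal_iff] at h
  exact h i

theorem transpose_mul_diagonal_mul_of_diagonal_mul_mul_inv {R : Type*} [CommRing R]
    {Q : Matrix n n R} (hQ : Qᵀ = Q) (X : Matrix n n R) (r c : n → R) :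
    (diagonal r * X * Q⁻¹)ᵀ * diagonal c * (diagonal r * X * Q⁻¹) =
      Q⁻¹ * (Xᵀ * diagonal (fun i => r i * c i * r i) * X) * Q⁻¹ := by
  simp only [transpose_mul, transpose_nonsing_inv, hQ, diagonal_transpose, Matrix.mul_assoc,
    diagonal_mul_diagonal']
  rw [← Matrix.mul_assoc (diagonal _), diagonal_mul_diagonal]

end Matrix

theorem IsRpowOf.eq_transpose_mul_diagonal_mul {d : ℕ} {t : ℝ} {M R V : Matrix (Fin d) (Fin d) ℝ}
    {f : Fin d → ℝ} (hR : IsRpowOf t M R) (hV : Vᵀ * V = 1) (hM : M = Vᵀ * diagonal f * V) :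
    R = Vᵀ * diagonal (fun i => f i ^ t) * V := by
  obtain ⟨U, e, hU, -, rfl, rfl⟩ := hR
  exact transpose_mul_diagonal_comp_mul_eq hU hV hM (· ^ t)

theorem weighted_geometric_mean_congruence_general (d : ℕ)
    (A B S : Matrix (Fin d) (Fin d) ℝ) (a b : Fin d → ℝ)
    (hA : A.PosDef) (hB : B.PosDef) (hS : IsUnit S)
    (hAd : A = Sᵀ * Matrix.diagonal a * S) (hBd : B = Sᵀ * Matrix.diagonal b * S)
    (t : ℝ)
    (Asqrt R : Matrix (Fin d) (Fin d) ℝ)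
    (hAsqrt : Asqrt.PosDef) (hAsqrt2 : Asqrt * Asqrt = A)
    (hR : IsRpowOf t (Asqrt⁻¹ * B * Asqrt⁻¹) R) :
    Asqrt * R * Asqrt =
      Sᵀ * Matrix.diagonal (fun i => a i ^ (1 - t) * b i ^ t) * S := by
  have ha := pos_of_posDef_transpose_mul_diagonal_mul hS (hAd ▸ hA)
  have hb := pos_of_posDef_transpose_mul_diagonal_mul hS (hBd ▸ hB)
  have hdet : IsUnit Asqrt.det := (isUnit_iff_isUnit_det _).mp hAsqrt.isUnit
  have hsym : Asqrtᵀ = Asqrt := hAsqrt.isHermitian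
  set W := diagonal (fun i => √(a i)) * S * Asqrt⁻¹
  have hW (c : Fin d → ℝ) : Wᵀ * diagonal c * W =
      Asqrt⁻¹ * (Sᵀ * diagonal (fun i => a i * c i) * S) * Asqrt⁻¹ := by
    rw [transpose_mul_diagonal_mul_of_diagonal_mul_mul_inv hsym]
    congr; funext i
    rw [mul_comm, ← mul_assoc, Real.mul_self_sqrt (ha i).le]
  have hWW : Wᵀ * W = 1 := by
    simpa [← hAd, ← hAsqrt2, Matrix.mul_assoc, nonsing_inv_mul_cancel_left _ _ hdet,
      mul_nonsing_inv _ hdet] using hW 1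
  have hM : Asqrt⁻¹ * B * Asqrt⁻¹ = Wᵀ * diagonal (fun i => b i / a i) * W := by
    rw [hW, hBd]
    congr; funext i
    field_simp [(ha i).ne']
  rw [hR.eq_transpose_mul_diagonal_mul hWW hM, hW, ← Matrix.mul_assoc,
    mul_nonsing_inv_cancel_left _ _ hdet, nonsing_inv_mul_cancel_right _ _ hdet]
  congr; funext i
  rw [Real.div_rpow (hb i).le (ha i).le, Real.rpow_sub (ha i), Real.rpow_one]
  ring

/-- If `A = Sᵀ (diagonal a) S` and `B = Sᵀ (diagonal b) S` with `S` invertible, then the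
weighted geometric mean `A #_t B = A^{1/2} (A^{-1/2} B A^{-1/2})^t A^{1/2}` equals
`Sᵀ (diagonal a)^{1-t} (diagonal b)^t S`. -/
theorem weighted_geometric_mean_congruence (d : ℕ)
    (A B S : Matrix (Fin d) (Fin d) ℝ) (a b : Fin d → ℝ)
    (hA : A.PosDef) (hB : B.PosDef) (hS : IsUnit S)
    (hAd : A = Sᵀ * Matrix.diagonal a * S) (hBd : B = Sᵀ * Matrix.diagonal b * S)
    (t : ℝ) (ht0 : 0 < t) (ht1 : t < 1)
    (Asqrt R : Matrix (Fin d) (Fin d) ℝ)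
    (hAsqrt : Asqrt.PosDef) (hAsqrt2 : Asqrt * Asqrt = A)
    (hR : IsRpowOf t (Asqrt⁻¹ * B * Asqrt⁻¹) R) :
    Asqrt * R * Asqrt =
      Sᵀ * Matrix.diagonal (fun i => a i ^ (1 - t) * b i ^ t) * S :=
  weighted_geometric_mean_congruence_general d A B S a b hA hB hS hAd hBd t Asqrt R hAsqrt hAsqrt2
    hR
end

section
/- Let (Ω, 𝒜, μ) be a σ-finite complete measure space and F : Ω → 𝒦(ℝ^d) a measurable map taking values in nonempty convex symmetric closed sets. Then the polar map F°, defined by F°(x) = F(x)°, is also measurable. -/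
open MeasureTheory
open scoped RealInnerProductSpace

/-- Measurability of a closed-set valued map: preimages of open sets (in the hitting
sense) are measurable. -/
def SetValuedMeasurable {Ω : Type*} [MeasurableSpace Ω] {d : ℕ}
    (F : Ω → Set (EuclideanSpace ℝ (Fin d))) : Prop :=
  ∀ U : Set (EuclideanSpace ℝ (Fin d)), IsOpen U → MeasurableSet {x | (F x ∩ U).Nonempty}

/-! A point `v` lies outside the polar of `K` iff `(v, w)` lies in the open set
`{|⟪v, w⟫| > 1}` for some `w ∈ K`. By compactness, the polar misses a compact `C` iff `C` is
covered by finitely many basic open sets `a` for which some basic open `b` with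
`a ×ˢ b ⊆ {|⟪v, w⟫| > 1}` meets `K`. Over a countable basis there are only countably many
such finite families, so "the polar of `F x` misses `C`" is a countable union of finite
intersections of hitting events of `F`; open sets of `ℝ^d` are countable unions of compacts. -/

open Set TopologicalSpace

theorem IsOpen.isSigmaCompact {X : Type*} [TopologicalSpace X] [LocallyCompactSpace X]
    [SecondCountableTopology X] {U : Set X} (hU : IsOpen U) : IsSigmaCompact U :=
  have := hU.locallyCompactSpace
  isSigmaCompact_iff_sigmaCompactSpace.2 inferInstance

section RelPolar

variable {Ω X Y : Type*} [MeasurableSpace Ω] [TopologicalSpace X] [TopologicalSpace Y]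

theorem measurableSet_inter_nonempty_of_isOpen [LocallyCompactSpace X]
    [SecondCountableTopology X] {G : Ω → Set X}
    (hG : ∀ C, IsCompact C → MeasurableSet {x | G x ∩ C = ∅}) {U : Set X} (hU : IsOpen U) :
    MeasurableSet {x | (G x ∩ U).Nonempty} := by
  obtain ⟨C, hC, rfl⟩ := hU.isSigmaCompact
  have hunion : {x | (G x ∩ ⋃ n, C n).Nonempty} = ⋃ n, {x | G x ∩ C n = ∅}ᶜ := by
    ext x
    simp [inter_iUnion, nonempty_iff_ne_empty]
  rw [hunion]
  exact .iUnion fun n => (hG _ (hC n)).compl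

def relPolar (S : Set (X × Y)) (K : Set Y) : Set X :=
  {v | ∀ w ∈ K, (v, w) ∉ S}

variable [SecondCountableTopology X] [SecondCountableTopology Y]

def rectangleCovers (S : Set (X × Y)) (C : Set X) : Set (Set (Set X × Set Y)) :=
  {t | t.Finite ∧ t ⊆ {p ∈ countableBasis X ×ˢ countableBasis Y | p.1 ×ˢ p.2 ⊆ S} ∧
    C ⊆ ⋃ p ∈ t, p.1}

theorem countable_rectangleCovers (S : Set (X × Y)) (C : Set X) :
    (rectangleCovers S C).Countable :=
  (countable_ofPred_finite_subset
    ((countable_countableBasis X).prod (countable_countableBasis Y))).mono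
    fun _ ⟨hfin, hsub, _⟩ => show _ ∧ _ from ⟨hfin, fun _ hp => (hsub hp).1⟩

theorem relPolar_inter_eq_empty_iff {S : Set (X × Y)} (hS : IsOpen S) {C : Set X}
    (hC : IsCompact C) {K : Set Y} :
    relPolar S K ∩ C = ∅ ↔ ∃ t ∈ rectangleCovers S C, ∀ p ∈ t, (K ∩ p.2).Nonempty := by
  constructor
  · intro hempty
    have hcover : C ⊆ ⋃ p ∈ {p ∈ countableBasis X ×ˢ countableBasis Y |
        p.1 ×ˢ p.2 ⊆ S ∧ (K ∩ p.2).Nonempty}, p.1 := by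
      intro v hvC
      have hv : v ∉ relPolar S K := fun hv => hempty.subset ⟨hv, hvC⟩
      simp only [relPolar, mem_ofPred_eq, not_forall, not_not] at hv
      obtain ⟨w, hwK, hvw⟩ := hv
      obtain ⟨A, B, hA, hB, hvA, hwB, hAB⟩ := isOpen_prod_iff.1 hS v w hvw
      obtain ⟨a, ha, hva, haA⟩ := (isBasis_countableBasis X).exists_subset_of_mem_open hvA hA
      obtain ⟨b, hb, hwb, hbB⟩ := (isBasis_countableBasis Y).exists_subset_of_mem_open hwB hB
      exact mem_biUnion (x := (a, b)) ⟨⟨ha, hb⟩, (prod_mono haA hbB).trans hAB, w, hwK, hwb⟩ hva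
    obtain ⟨t, hts, htfin, hCt⟩ := hC.elim_finite_subcover_image
      (fun p hp => isOpen_of_mem_countableBasis hp.1.1) hcover
    exact ⟨t, ⟨htfin, fun p hp => ⟨(hts hp).1, (hts hp).2.1⟩, hCt⟩, fun p hp => (hts hp).2.2⟩
  · rintro ⟨t, ⟨-, htS, hCt⟩, hKt⟩
    refine eq_empty_iff_forall_notMem.2 fun v hvKC => ?_
    obtain ⟨hv, hvC⟩ := hvKC
    obtain ⟨p, hpt, hvp⟩ := mem_iUnion₂.1 (hCt hvC)
    obtain ⟨w, hwK, hwp⟩ := hKt p hpt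
    exact hv w hwK ((htS hpt).2 ⟨hvp, hwp⟩)

theorem measurableSet_relPolar_inter_eq_empty {F : Ω → Set Y}
    (hF : ∀ U, IsOpen U → MeasurableSet {x | (F x ∩ U).Nonempty}) {S : Set (X × Y)}
    (hS : IsOpen S) {C : Set X} (hC : IsCompact C) :
    MeasurableSet {x | relPolar S (F x) ∩ C = ∅} := by
  have hunion : {x | relPolar S (F x) ∩ C = ∅} =
      ⋃ t ∈ rectangleCovers S C, ⋂ p ∈ t, {x | (F x ∩ p.2).Nonempty} := by
    ext x
    simp only [mem_ofPred_eq, relPolar_inter_eq_empty_iff hS hC, mem_iUnion, mem_iInter,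
      exists_prop]
  rw [hunion]
  exact .biUnion (countable_rectangleCovers S C) fun t ht => .biInter ht.1.countable
    fun p hp => hF _ (isOpen_of_mem_countableBasis (ht.2.1 hp).1.2)

theorem measurableSet_relPolar_inter_nonempty [LocallyCompactSpace X] {F : Ω → Set Y}
    (hF : ∀ U, IsOpen U → MeasurableSet {x | (F x ∩ U).Nonempty}) {S : Set (X × Y)}
    (hS : IsOpen S) {U : Set X} (hU : IsOpen U) :
    MeasurableSet {x | (relPolar S (F x) ∩ U).Nonempty} :=
  measurableSet_inter_nonempty_of_isOpen
    (fun _ hC => measurableSet_relPolar_inter_eq_empty hF hS hC) hU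

end RelPolar

theorem polarSet_eq_relPolar {d : ℕ} (K : Set (EuclideanSpace ℝ (Fin d))) :
    polarSet K = relPolar {p | 1 < |⟪p.1, p.2⟫|} K := by
  ext v
  simp only [polarSet, relPolar, mem_ofPred_eq, not_lt]

theorem isOpen_one_lt_abs_inner {d : ℕ} :
    IsOpen {p : EuclideanSpace ℝ (Fin d) × EuclideanSpace ℝ (Fin d) | 1 < |⟪p.1, p.2⟫|} :=
  isOpen_lt continuous_const (continuous_fst.inner continuous_snd).abs

theorem polar_map_measurable_general {Ω : Type*} [MeasurableSpace Ω] (d : ℕ)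
    (F : Ω → Set (EuclideanSpace ℝ (Fin d)))
    (hF : SetValuedMeasurable F) :
    SetValuedMeasurable (fun x => polarSet (F x)) := by
  intro U hU
  simp only [polarSet_eq_relPolar]
  exact measurableSet_relPolar_inter_nonempty hF isOpen_one_lt_abs_inner hU

/-- If `F` is a measurable map with values in nonempty convex symmetric closed subsets
of ℝ^d, then the polar map `F°` is measurable. -/
theorem polar_map_measurable {Ω : Type*} [MeasurableSpace Ω] (μ : Measure Ω)
    [SigmaFinite μ] (hcompl : μ.IsComplete) (d : ℕ)
    (F : Ω → Set (EuclideanSpace ℝ (Fin d)))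
    (hne : ∀ x, (F x).Nonempty) (hc : ∀ x, Convex ℝ (F x))
    (hs : ∀ x, ∀ v ∈ F x, -v ∈ F x) (hcl : ∀ x, IsClosed (F x))
    (hF : SetValuedMeasurable F) :
    SetValuedMeasurable (fun x => polarSet (F x)) :=
  polar_map_measurable_general d F hF
end
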